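/- Let (X, 𝒰, ∫) be a Daniell space, let f : X → ℝ and f_n ∈ 𝒰 with f ≃ ∑ f_n. If f(x) ≥ 0 for every x ∈ X, then ∑_{n=1}^∞ ∫ f_n ≥ 0 (the series converging absolutely by condition (A)). -/

import Mathlib

open Filter Topology

/-- A Daniell space: a Riesz space `U` of real-valued functions on `X` together with a
positive linear functional `integral` satisfying the Daniell continuity condition (II). -/
structure DaniellSpace (X : Type*) where
  U : Set (X → ℝ)
  integral : (X → ℝ) → ℝ
  zero_mem : (0 : X → ℝ) ∈ U
  add_mem : ∀ {f g : X → ℝ}, f ∈ U → g ∈ U → f + g ∈ U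
  smul_mem : ∀ (c : ℝ) {f : X → ℝ}, f ∈ U → c • f ∈ U
  sup_mem : ∀ {f g : X → ℝ}, f ∈ U → g ∈ U → f ⊔ g ∈ U
  inf_mem : ∀ {f g : X → ℝ}, f ∈ U → g ∈ U → f ⊓ g ∈ U
  integral_add : ∀ {f g : X → ℝ}, f ∈ U → g ∈ U →
    integral (f + g) = integral f + integral g
  integral_smul : ∀ (c : ℝ) {f : X → ℝ}, f ∈ U → integral (c • f) = c * integral f
  integral_nonneg : ∀ {f : X → ℝ}, f ∈ U → (∀ x, 0 ≤ f x) → 0 ≤ integral f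
  integral_tendsto_zero : ∀ f : ℕ → X → ℝ, (∀ n, f n ∈ U) → Antitone f →
    (∀ x, Tendsto (fun n => f n x) atTop (𝓝 (0 : ℝ))) →
    Tendsto (fun n => integral (f n)) atTop (𝓝 (0 : ℝ))

/-- `f ≃ ∑ fₙ` : the `fₙ` belong to `U`, `∑ ∫|fₙ| < ∞`, and `f x = ∑ fₙ x` at every
point where the series converges absolutely. -/
def DaniellSpace.Rep {X : Type*} (D : DaniellSpace X) (f : X → ℝ) (fs : ℕ → X → ℝ) : Prop :=
  (∀ n, fs n ∈ D.U) ∧ (Summable fun n => D.integral |fs n|) ∧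
  ∀ x, (Summable fun n => |fs n x|) → HasSum (fun n => fs n x) (f x)

/-- The extension `𝒰*` of `𝒰`. -/
def DaniellSpace.Ustar {X : Type*} (D : DaniellSpace X) : Set (X → ℝ) :=
  {f | ∃ fs, D.Rep f fs}

-- The integral on `𝒰*`: `∫ f = ∑ ∫ fₙ` for any representation `f ≃ ∑ fₙ`
-- (the value is independent of the representation).
open Classical in
noncomputable def DaniellSpace.integralStar {X : Type*} (D : DaniellSpace X)
    (f : X → ℝ) : ℝ :=
  if h : ∃ fs, D.Rep f fs then ∑' n, D.integral (h.choose n) else 0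

/-- A Daniell space is complete if `f ≃ ∑ fₙ` with all `fₙ ∈ 𝒰` implies `f ∈ 𝒰`. -/
def DaniellSpace.Complete {X : Type*} (D : DaniellSpace X) : Prop :=
  ∀ (f : X → ℝ) (fs : ℕ → X → ℝ), D.Rep f fs → f ∈ D.U

/-- A null set: its characteristic function is a null function. -/
def DaniellSpace.NullSet {X : Type*} (D : DaniellSpace X) (S : Set X) : Prop :=
  S.indicator (fun _ => (1 : ℝ)) ∈ D.U ∧ D.integral (S.indicator fun _ => (1 : ℝ)) = 0

/-!
Fix `N` and put `gₘ = ∑_{n<N} fₙ + ∑_{N≤n<N+m} |fₙ|`. This sequence increases in `m`, and at each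
point it tends either to `+∞` or to a limit `≥ ∑ fₙ(x) = f(x) ≥ 0`. Hence the negative parts `gₘ⁻`
decrease to `0`, condition (II) gives `∫ gₘ⁻ → 0`, and so
`∑_{n<N} ∫ fₙ + ∑_{n≥N} ∫ |fₙ| = lim ∫ gₘ ≥ 0`. By (A) the second sum vanishes as `N → ∞`.
-/

open Finset in
lemma eventually_neg_lt_sum_range_add_sum_range_abs {a : ℕ → ℝ}
    (ha : Summable (fun n => |a n|) → 0 ≤ ∑' n, a n) (N : ℕ) {ε : ℝ} (hε : 0 < ε) :
    ∀ᶠ m in atTop, -ε < ∑ n ∈ range N, a n + ∑ n ∈ range m, |a (n + N)| := by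
  by_cases habs : Summable fun n => |a n|
  · have htail : Summable fun n => |a (n + N)| := (summable_nat_add_iff N).2 habs
    have hle : ∑' n, a n ≤ ∑ n ∈ range N, a n + ∑' n, |a (n + N)| := by
      rw [← habs.of_abs.sum_add_tsum_nat_add N]
      exact add_le_add le_rfl <|
        ((summable_nat_add_iff N).2 habs.of_abs).tsum_le_tsum (fun n => le_abs_self _) htail
    exact (tendsto_const_nhds.add htail.hasSum.tendsto_sum_nat).eventually_const_lt
      (by linarith [ha habs])
  · have hdiv : Tendsto (fun m => ∑ n ∈ range m, |a (n + N)|) atTop atTop :=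
      (not_summable_iff_tendsto_nat_atTop_of_nonneg fun n => abs_nonneg _).1
        fun h => habs ((summable_nat_add_iff N).1 h)
    exact (tendsto_atTop_add_const_left _ _ hdiv).eventually_gt_atTop _

namespace DaniellSpace

variable {X : Type*} (D : DaniellSpace X)

lemma neg_mem {f : X → ℝ} (hf : f ∈ D.U) : -f ∈ D.U := by
  simpa using D.smul_mem (-1) hf

lemma abs_mem {f : X → ℝ} (hf : f ∈ D.U) : |f| ∈ D.U :=
  D.sup_mem hf (D.neg_mem hf)

lemma negPart_mem {f : X → ℝ} (hf : f ∈ D.U) : f⁻ ∈ D.U :=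
  D.sup_mem (D.neg_mem hf) D.zero_mem

lemma sum_mem (s : Finset ℕ) {g : ℕ → X → ℝ} (hg : ∀ n, g n ∈ D.U) :
    ∑ n ∈ s, g n ∈ D.U := by
  classical
  induction s using Finset.induction_on with
  | empty => simpa using D.zero_mem
  | insert _ _ hn ih => rw [Finset.sum_insert hn]; exact D.add_mem (hg _) ih

lemma integral_zero : D.integral 0 = 0 := by
  simpa using D.integral_smul 0 D.zero_mem

lemma integral_neg {f : X → ℝ} (hf : f ∈ D.U) : D.integral (-f) = -D.integral f := by
  simpa using D.integral_smul (-1) hf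

lemma integral_sum (s : Finset ℕ) {g : ℕ → X → ℝ} (hg : ∀ n, g n ∈ D.U) :
    D.integral (∑ n ∈ s, g n) = ∑ n ∈ s, D.integral (g n) := by
  classical
  induction s using Finset.induction_on with
  | empty => simpa using D.integral_zero
  | insert _ _ hn ih =>
    rw [Finset.sum_insert hn, Finset.sum_insert hn, D.integral_add (hg _) (D.sum_mem _ hg), ih]

lemma integral_mono {f g : X → ℝ} (hf : f ∈ D.U) (hg : g ∈ D.U) (hfg : ∀ x, f x ≤ g x) :
    D.integral f ≤ D.integral g := by
  have hdiff : 0 ≤ D.integral (g + -f) :=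
    D.integral_nonneg (D.add_mem hg (D.neg_mem hf)) fun x => by simpa using hfg x
  rw [D.integral_add hg (D.neg_mem hf), D.integral_neg hf] at hdiff
  linarith

lemma abs_integral_le {f : X → ℝ} (hf : f ∈ D.U) : |D.integral f| ≤ D.integral |f| := by
  have hneg : D.integral (-|f|) ≤ D.integral f :=
    D.integral_mono (D.neg_mem (D.abs_mem hf)) hf fun x => neg_abs_le (f x)
  rw [D.integral_neg (D.abs_mem hf)] at hneg
  exact abs_le.2 ⟨hneg, D.integral_mono hf (D.abs_mem hf) fun x => le_abs_self (f x)⟩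

lemma neg_integral_negPart_le {g : X → ℝ} (hg : g ∈ D.U) : -D.integral g⁻ ≤ D.integral g := by
  rw [← D.integral_neg (D.negPart_mem hg)]
  exact D.integral_mono (D.neg_mem (D.negPart_mem hg)) hg fun x => neg_le.1 (neg_le_negPart (g x))

lemma nonneg_of_tendsto_integral_of_monotone {g : ℕ → X → ℝ} {c : ℝ} (hg : ∀ m, g m ∈ D.U)
    (hmono : Monotone g) (hlim : ∀ x, ∀ ε > 0, ∀ᶠ m in atTop, -ε < g m x)
    (hc : Tendsto (fun m => D.integral (g m)) atTop (𝓝 c)) : 0 ≤ c := by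
  have hneg : Tendsto (fun m => D.integral (g m)⁻) atTop (𝓝 0) := by
    refine D.integral_tendsto_zero _ (fun m => D.negPart_mem (hg m))
      (fun a b hab => negPart_anti (hmono hab)) fun x => ?_
    refine tendsto_order.2 ⟨fun a ha => Eventually.of_forall fun m => ha.trans_le ?_,
      fun ε hε => (hlim x ε hε).mono fun m hm => ?_⟩
    · exact negPart_nonneg (g m x)
    · exact negPart_lt.2 ⟨hm, hε⟩
  simpa using le_of_tendsto_of_tendsto' hneg.neg hc fun m => D.neg_integral_negPart_le (hg m)

end DaniellSpace

namespace DaniellSpace.Rep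

open Finset

variable {X : Type*} {D : DaniellSpace X} {f : X → ℝ} {fs : ℕ → X → ℝ}

lemma sum_integral_add_tsum_integral_abs_nonneg (hrep : D.Rep f fs) (hf : ∀ x, 0 ≤ f x)
    (N : ℕ) : 0 ≤ ∑ n ∈ range N, D.integral (fs n) + ∑' n, D.integral |fs (n + N)| := by
  obtain ⟨hmem, hsum, hpt⟩ := hrep
  have habs_mem : ∀ n, |fs (n + N)| ∈ D.U := fun n => D.abs_mem (hmem _)
  refine D.nonneg_of_tendsto_integral_of_monotone
    (g := fun m => ∑ n ∈ range N, fs n + ∑ n ∈ range m, |fs (n + N)|)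
    (fun m => D.add_mem (D.sum_mem _ hmem) (D.sum_mem _ habs_mem)) ?_ ?_ ?_
  · intro a b hab x
    simp only [Pi.add_apply, Finset.sum_apply, Pi.abs_apply]
    gcongr
  · intro x ε hε
    simpa only [Pi.add_apply, Finset.sum_apply, Pi.abs_apply] using
      eventually_neg_lt_sum_range_add_sum_range_abs (a := fun n => fs n x)
        (fun h => (hpt x h).tsum_eq ▸ hf x) N hε
  · simp only [D.integral_add (D.sum_mem _ hmem) (D.sum_mem _ habs_mem),
      D.integral_sum _ hmem, D.integral_sum _ habs_mem]
    exact tendsto_const_nhds.add ((summable_nat_add_iff N).2 hsum).hasSum.tendsto_sum_nat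

end DaniellSpace.Rep

theorem daniell_rep_nonneg_general {X : Type*} (D : DaniellSpace X)
    (f : X → ℝ) (fs : ℕ → X → ℝ) (hrep : D.Rep f fs) (hf : ∀ x, 0 ≤ f x) :
    0 ≤ ∑' n, D.integral (fs n) := by
  have hsummable : Summable fun n => D.integral (fs n) :=
    .of_norm_bounded hrep.2.1 fun n => D.abs_integral_le (hrep.1 n)
  have hlim : Tendsto (fun N => ∑ n ∈ Finset.range N, D.integral (fs n) +
      ∑' n, D.integral |fs (n + N)|) atTop (𝓝 (∑' n, D.integral (fs n) + 0)) :=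
    hsummable.hasSum.tendsto_sum_nat.add (tendsto_sum_nat_add fun n => D.integral |fs n|)
  simpa using ge_of_tendsto' hlim (hrep.sum_integral_add_tsum_integral_abs_nonneg hf)

/-- If `f ≃ ∑ fₙ` and `f ≥ 0`, then `∑ ∫fₙ ≥ 0`. -/
theorem daniell_rep_nonneg {X : Type*} [Nonempty X] (D : DaniellSpace X)
    (f : X → ℝ) (fs : ℕ → X → ℝ) (hrep : D.Rep f fs) (hf : ∀ x, 0 ≤ f x) :
    0 ≤ ∑' n, D.integral (fs n) :=
  daniell_rep_nonneg_general D f fs hrep hf
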